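/- arXiv:1708.08814 — 5 statements merged into one kernel-verified Lean document; each statement's English description precedes it below -/
import Mathlib

section
/- Let V and W be finite vector spaces over F_2, let γ: V → W be an injective map, λ: W → V a surjective linear map, and k ∈ V, and define ε_k(x) = γ(x)λ + k. Then ε_k is a permutation of V if and only if {a + b | a, b ∈ Im γ} ∩ Ker λ = {0}. -/
/-- ε_k = γλσ_k is a permutation of V iff
    {a + b | a, b ∈ Im γ} ∩ Ker λ = {0}. -/
theorem stmt_0 {V W : Type*} [AddCommGroup V] [Module (ZMod 2) V] [Fintype V]
    [AddCommGroup W] [Module (ZMod 2) W] [Fintype W]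
    (γ : V → W) (hγ : Function.Injective γ)
    (lam : W →ₗ[ZMod 2] V) (hlam : Function.Surjective lam) (k : V) :
    Function.Bijective (fun x : V => lam (γ x) + k) ↔
      {w : W | ∃ a ∈ Set.range γ, ∃ b ∈ Set.range γ, w = a + b} ∩
          (LinearMap.ker lam : Set W) = {0} := by
  have h2W : ∀ a : W, a + a = 0 := fun a => by
    rw [← two_smul (ZMod 2) a]
    rw [show (2:ZMod 2) = 0 from rfl, zero_smul]
  have h2V : ∀ a : V, a + a = 0 := fun a => by
    rw [← two_smul (ZMod 2) a]
    rw [show (2:ZMod 2) = 0 from rfl, zero_smul]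
  constructor
  · intro hbij
    ext w
    simp only [Set.mem_inter_iff, Set.mem_setOf_eq, SetLike.mem_coe, LinearMap.mem_ker,
      Set.mem_singleton_iff]
    constructor
    · rintro ⟨⟨a, ⟨x, rfl⟩, b, ⟨y, rfl⟩, rfl⟩, hker⟩
      have : lam (γ x) + lam (γ y) = 0 := by simpa using hker
      have hxy : x = y := by
        have := hbij.1 (a₁ := x) (a₂ := y) (by
          simp only []
          have : lam (γ x) = lam (γ y) := by
            have := congrArg (· + lam (γ y)) this
            simpa [add_assoc, h2V] using this
          rw [this])
        exact this
      subst hxy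
      exact h2W _
    · rintro rfl
      exact ⟨⟨γ 0, ⟨0, rfl⟩, γ 0, ⟨0, rfl⟩, (h2W _).symm⟩, by simp⟩
  · intro hset
    refine (Finite.injective_iff_bijective).mp ?_
    intro x y hxy
    simp only [] at hxy
    have h1 : lam (γ x) = lam (γ y) := by
      have := congrArg (· + (-k)) hxy
      simpa [add_assoc] using this
    have hmem : γ x + γ y ∈ ({0} : Set W) := by
      rw [← hset]
      refine ⟨⟨γ x, ⟨x, rfl⟩, γ y, ⟨y, rfl⟩, rfl⟩, ?_⟩
      simp [LinearMap.mem_ker, h1, h2V]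
    have : γ x + γ y = 0 := hmem
    have : γ x = γ y := by
      have := congrArg (· + γ y) this
      simpa [add_assoc, h2W] using this
    exact hγ this
end

section
/- Let V = (F_2)^n, ρ ∈ Sym(V) with ρ ∉ AGL(V), and let ρ̄ be the Feistel operator (x₁,x₂) ↦ (x₂, x₁ + ρ(x₂)) on V × V. Let Γ = ⟨T_n, ρ⟩ ≤ Sym(V) and Γ̄ = ⟨T_{(0,n)}, ρ̄⟩ ≤ Sym(V × V), where T_n is the translation group of V and T_{(0,n)} = {(x₁,x₂) ↦ (x₁, x₂+k) : k ∈ V}. If Γ is primitive on V, then Γ̄ is primitive on V × V. -/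
/-- A subgroup of `Equiv.Perm M` acts transitively on `M`. -/
def IsTransitiveSub {M : Type*} (G : Subgroup (Equiv.Perm M)) : Prop :=
  ∀ x y : M, ∃ g ∈ G, g x = y

/-- A block system for `G ≤ Sym(M)`: a non-trivial `G`-invariant partition of `M`. -/
def IsBlockSystem {M : Type*} (G : Subgroup (Equiv.Perm M)) (B : Set (Set M)) : Prop :=
  Setoid.IsPartition B ∧ (∀ b ∈ B, ∀ g ∈ G, (g : Equiv.Perm M) '' b ∈ B) ∧
    B ≠ {Set.univ} ∧ B ≠ {b : Set M | ∃ x : M, b = {x}}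

/-- A subgroup of `Equiv.Perm M` is primitive: transitive and with no block system. -/
def IsPrimitiveSub {M : Type*} (G : Subgroup (Equiv.Perm M)) : Prop :=
  IsTransitiveSub G ∧ ¬ ∃ B : Set (Set M), IsBlockSystem G B

variable {n : ℕ}

/-- The Feistel operator induced by a permutation ρ of V = (F₂)ⁿ. -/
def feistelPerm (ρ : Equiv.Perm (Fin n → ZMod 2)) :
    Equiv.Perm ((Fin n → ZMod 2) × (Fin n → ZMod 2)) where
  toFun x := (x.2, x.1 + ρ x.2)
  invFun y := (y.2 + ρ y.1, y.1)
  left_inv x := by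
    ext i
    · simp [add_assoc, CharTwo.add_self_eq_zero]
    · simp
  right_inv y := by
    ext i
    · simp
    · simp [add_assoc, CharTwo.add_self_eq_zero]

lemma hh2 (x : Fin n → ZMod 2) : x + x = 0 := by
  funext i; exact CharTwo.add_self_eq_zero (x i)

lemma hh2' (x y : Fin n → ZMod 2) : x + (x + y) = y := by
  rw [← add_assoc, hh2, zero_add]

def ttop (ρ : Equiv.Perm (Fin n → ZMod 2)) (x y : (Fin n → ZMod 2) × (Fin n → ZMod 2)) :
    (Fin n → ZMod 2) × (Fin n → ZMod 2) :=
  (x.1 + y.1, x.2 + y.2 + ρ x.1 + ρ y.1 + ρ (x.1 + y.1) + ρ 0)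

lemma ttop_cancel (ρ : Equiv.Perm (Fin n → ZMod 2)) (x y : (Fin n → ZMod 2) × (Fin n → ZMod 2)) :
    ttop ρ x (ttop ρ x y) = y := by
  simp only [ttop]
  ext1
  · simp [hh2']
  · simp only []
    rw [hh2' x.1 y.1]
    simp [add_assoc, add_comm, add_left_comm, hh2, hh2']

lemma ttop_comm (ρ : Equiv.Perm (Fin n → ZMod 2)) (x y : (Fin n → ZMod 2) × (Fin n → ZMod 2)) :
    ttop ρ x y = ttop ρ y x := by
  simp only [ttop]
  ext1
  · simp [add_comm]
  · rw [add_comm y.1 x.1]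
    simp [add_assoc, add_comm, add_left_comm]

lemma ttop_zero (ρ : Equiv.Perm (Fin n → ZMod 2)) (x : (Fin n → ZMod 2) × (Fin n → ZMod 2)) :
    ttop ρ x 0 = x := by
  simp [ttop, add_assoc, add_comm, add_left_comm, hh2, hh2']

lemma ttop_zero' (ρ : Equiv.Perm (Fin n → ZMod 2)) (x : (Fin n → ZMod 2) × (Fin n → ZMod 2)) :
    ttop ρ 0 x = x := by
  simp [ttop, add_assoc, add_comm, add_left_comm, hh2, hh2']

lemma feistel_apply (ρ : Equiv.Perm (Fin n → ZMod 2)) (x : (Fin n → ZMod 2) × (Fin n → ZMod 2)) :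
    feistelPerm ρ x = (x.2, x.1 + ρ x.2) := rfl

lemma feistel_inv_apply (ρ : Equiv.Perm (Fin n → ZMod 2))
    (x : (Fin n → ZMod 2) × (Fin n → ZMod 2)) :
    (feistelPerm ρ)⁻¹ x = (x.2 + ρ x.1, x.1) := rfl

def gPerm (ρ : Equiv.Perm (Fin n → ZMod 2)) (x : (Fin n → ZMod 2) × (Fin n → ZMod 2)) :
    Equiv.Perm ((Fin n → ZMod 2) × (Fin n → ZMod 2)) :=
  feistelPerm ρ * Equiv.addRight ((0 : Fin n → ZMod 2), x.1) * (feistelPerm ρ)⁻¹ *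
    Equiv.addRight ((0 : Fin n → ZMod 2), x.2 + ρ 0 + ρ x.1)

lemma gPerm_apply (ρ : Equiv.Perm (Fin n → ZMod 2)) (x y : (Fin n → ZMod 2) × (Fin n → ZMod 2)) :
    gPerm ρ x y = ttop ρ x y := by
  simp [gPerm, ttop, Equiv.Perm.mul_apply, feistel_apply, feistel_inv_apply, Equiv.coe_addRight,
    Prod.ext_iff, add_assoc, add_comm, add_left_comm, hh2, hh2']

lemma exists_blockSystem (ρ : Equiv.Perm (Fin n → ZMod 2))
    (P : Submodule (ZMod 2) (Fin n → ZMod 2))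
    (hcomp : ∀ a p, p ∈ P → ρ a + ρ (a + p) ∈ P)
    (h0 : P ≠ ⊥) (h1 : P ≠ ⊤) :
    ∃ B, IsBlockSystem (Subgroup.closure ({ρ} ∪
      {g : Equiv.Perm (Fin n → ZMod 2) | ∃ k : Fin n → ZMod 2, g = Equiv.addRight k})) B := by
  classical
  have pres : ∀ g ∈ Subgroup.closure ({ρ} ∪
      {g : Equiv.Perm (Fin n → ZMod 2) | ∃ k : Fin n → ZMod 2, g = Equiv.addRight k}),
      ∀ x y : Fin n → ZMod 2, x + y ∈ P ↔ g x + g y ∈ P := by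
    intro g hg
    induction hg using Subgroup.closure_induction with
    | mem g hgen =>
      rcases hgen with h | ⟨k, rfl⟩
      · rw [Set.mem_singleton_iff] at h
        rw [h]
        intro x y
        constructor
        · intro hxy
          have := hcomp x (x + y) hxy
          rwa [hh2' x y] at this
        · intro hxy
          have hinj : Function.Injective (fun q : P => (⟨ρ x + ρ (x + q), hcomp x q q.2⟩ : P)) := by
            intro q q' hqq'
            have h2 : ρ x + ρ (x + (q : Fin n → ZMod 2)) = ρ x + ρ (x + (q' : Fin n → ZMod 2)) :=
              congrArg Subtype.val hqq'
            have h4 := ρ.injective (add_left_cancel h2)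
            exact Subtype.ext (add_left_cancel h4)
          have hsurj := Finite.injective_iff_surjective.mp hinj
          obtain ⟨q, hq⟩ := hsurj ⟨ρ x + ρ y, hxy⟩
          have h2 : ρ x + ρ (x + (q : Fin n → ZMod 2)) = ρ x + ρ y := congrArg Subtype.val hq
          have h3 : x + (q : Fin n → ZMod 2) = y := ρ.injective (add_left_cancel h2)
          have hxyq : x + y = (q : Fin n → ZMod 2) := by rw [← h3, hh2']
          rw [hxyq]; exact q.2
      · intro x y
        have : Equiv.addRight k x + Equiv.addRight k y = x + y := by
          simp only [Equiv.coe_addRight]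
          simp [add_assoc, add_comm, add_left_comm, hh2, hh2']
        rw [this]
    | one => intro x y; rfl
    | mul a b _ _ ha hb =>
      intro x y
      rw [hb x y, ha (b x) (b y)]
      simp [Equiv.Perm.mul_apply]
    | inv a _ ha =>
      intro x y
      have := ha (a⁻¹ x) (a⁻¹ y)
      simp only [show ∀ y, a (a⁻¹ y) = y from fun y => a.apply_symm_apply y] at this
      exact this.symm
  refine ⟨{s : Set (Fin n → ZMod 2) | ∃ a : Fin n → ZMod 2, s = {x | x + a ∈ P}}, ⟨?_, ?_⟩,
    ?_, ?_, ?_⟩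
  · rintro ⟨a, ha⟩
    have : a ∈ {x : Fin n → ZMod 2 | x + a ∈ P} := by
      show a + a ∈ P
      rw [hh2]; exact zero_mem P
    rw [← ha] at this
    exact this
  · intro x
    refine ⟨{y | y + x ∈ P}, ⟨⟨x, rfl⟩, by show x + x ∈ P; rw [hh2]; exact zero_mem P⟩, ?_⟩
    rintro b ⟨⟨a, rfl⟩, hxb⟩
    have hxa : x + a ∈ P := hxb
    ext y
    simp only [Set.mem_setOf_eq]
    constructor
    · intro h
      have e : y + x = (y + a) + (x + a) := by
        simp [add_assoc, add_comm, add_left_comm, hh2, hh2']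
      rw [e]; exact add_mem h hxa
    · intro h
      have e : y + a = (y + x) + (x + a) := by
        simp [add_assoc, add_comm, add_left_comm, hh2, hh2']
      rw [e]; exact add_mem h hxa
  · rintro b ⟨a, rfl⟩ g hg
    refine ⟨g a, ?_⟩
    ext z
    simp only [Set.mem_image, Set.mem_setOf_eq]
    constructor
    · rintro ⟨x, hx, rfl⟩
      exact (pres g hg x a).mp hx
    · intro hz
      refine ⟨g⁻¹ z, ?_, g.apply_symm_apply z⟩
      have := (pres g⁻¹ (inv_mem hg) z (g a)).mp hz
      simpa using this
  · intro h
    have hmem : ({x : Fin n → ZMod 2 | x + 0 ∈ P} : Set (Fin n → ZMod 2)) ∈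
        {s : Set (Fin n → ZMod 2) | ∃ a : Fin n → ZMod 2, s = {x | x + a ∈ P}} := ⟨0, rfl⟩
    rw [h, Set.mem_singleton_iff] at hmem
    apply h1
    rw [Submodule.eq_top_iff']
    intro x
    have : x ∈ {x : Fin n → ZMod 2 | x + 0 ∈ P} := by rw [hmem]; trivial
    simpa using this
  · intro h
    have hmem : ({x : Fin n → ZMod 2 | x + 0 ∈ P} : Set (Fin n → ZMod 2)) ∈
        {s : Set (Fin n → ZMod 2) | ∃ a : Fin n → ZMod 2, s = {x | x + a ∈ P}} := ⟨0, rfl⟩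
    rw [h] at hmem
    obtain ⟨c, hc⟩ := hmem
    have h0c : (0 : Fin n → ZMod 2) ∈ {x : Fin n → ZMod 2 | x + 0 ∈ P} := by
      show (0 : Fin n → ZMod 2) + 0 ∈ P
      rw [add_zero]; exact zero_mem P
    rw [hc] at h0c
    apply h0
    rw [Submodule.eq_bot_iff]
    intro x hx
    have hx' : x ∈ {x : Fin n → ZMod 2 | x + 0 ∈ P} := by
      show x + 0 ∈ P
      rwa [add_zero]
    rw [hc] at hx'
    rw [Set.mem_singleton_iff] at hx' h0c
    rw [hx', ← h0c]

/-- if ρ ∈ Sym(V) \ AGL(V) and Γ = ⟨T_n, ρ⟩ is primitive on V, then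
    Γ̄ = ⟨T_{(0,n)}, ρ̄⟩ is primitive on V × V. -/
theorem stmt_13 (ρ : Equiv.Perm (Fin n → ZMod 2))
    (hρ : ¬ ∃ (l : (Fin n → ZMod 2) →ₗ[ZMod 2] (Fin n → ZMod 2)) (c : Fin n → ZMod 2),
      ∀ x, ρ x = l x + c)
    (hprim : IsPrimitiveSub (Subgroup.closure ({ρ} ∪
      {g : Equiv.Perm (Fin n → ZMod 2) | ∃ k : Fin n → ZMod 2, g = Equiv.addRight k}))) :
    IsPrimitiveSub (Subgroup.closure ({feistelPerm ρ} ∪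
      {g : Equiv.Perm ((Fin n → ZMod 2) × (Fin n → ZMod 2)) |
        ∃ k : Fin n → ZMod 2, g = Equiv.addRight ((0 : Fin n → ZMod 2), k)})) := by
  classical
  have hfmem : feistelPerm ρ ∈ Subgroup.closure ({feistelPerm ρ} ∪
      {g : Equiv.Perm ((Fin n → ZMod 2) × (Fin n → ZMod 2)) |
        ∃ k : Fin n → ZMod 2, g = Equiv.addRight ((0 : Fin n → ZMod 2), k)}) :=
    Subgroup.subset_closure (Or.inl rfl)
  have htmem : ∀ k : Fin n → ZMod 2, Equiv.addRight ((0 : Fin n → ZMod 2), k) ∈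
      Subgroup.closure ({feistelPerm ρ} ∪
      {g : Equiv.Perm ((Fin n → ZMod 2) × (Fin n → ZMod 2)) |
        ∃ k : Fin n → ZMod 2, g = Equiv.addRight ((0 : Fin n → ZMod 2), k)}) :=
    fun k => Subgroup.subset_closure (Or.inr ⟨k, rfl⟩)
  have hgmem : ∀ x : (Fin n → ZMod 2) × (Fin n → ZMod 2), gPerm ρ x ∈
      Subgroup.closure ({feistelPerm ρ} ∪
      {g : Equiv.Perm ((Fin n → ZMod 2) × (Fin n → ZMod 2)) |
        ∃ k : Fin n → ZMod 2, g = Equiv.addRight ((0 : Fin n → ZMod 2), k)}) :=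
    fun x => mul_mem (mul_mem (mul_mem hfmem (htmem x.1)) (inv_mem hfmem)) (htmem _)
  constructor
  · -- transitivity
    intro x y
    refine ⟨gPerm ρ (ttop ρ y x), hgmem _, ?_⟩
    rw [gPerm_apply, ttop_comm ρ y x, ttop_comm ρ (ttop ρ x y) x, ttop_cancel]
  · rintro ⟨B, ⟨hne, hex⟩, hinv, hBuniv, hBsing⟩
    obtain ⟨W, hW, hWuniq⟩ := hex (0 : (Fin n → ZMod 2) × (Fin n → ZMod 2))
    have hW00 : ((0 : Fin n → ZMod 2), (0 : Fin n → ZMod 2)) ∈ W := hW.2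
    have huniq : ∀ (x : (Fin n → ZMod 2) × (Fin n → ZMod 2)) (b b' : _),
        b ∈ B → x ∈ b → b' ∈ B → x ∈ b' → b = b' := by
      intro x b b' h1 h2 h3 h4
      obtain ⟨c, _, hcu⟩ := hex x
      rw [hcu b ⟨h1, h2⟩, hcu b' ⟨h3, h4⟩]
    have hSB : ∀ x, (fun y => ttop ρ x y) '' W ∈ B := by
      intro x
      have h := hinv W hW.1 (gPerm ρ x) (hgmem x)
      have e : ⇑(gPerm ρ x) '' W = (fun y => ttop ρ x y) '' W :=
        Set.image_congr' (fun y => gPerm_apply ρ x y)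
      rwa [e] at h
    have hxS : ∀ x, x ∈ (fun y => ttop ρ x y) '' W := fun x => ⟨0, hW.2, ttop_zero ρ x⟩
    have hmemS : ∀ x y, y ∈ (fun z => ttop ρ x z) '' W ↔ ttop ρ x y ∈ W := by
      intro x y
      constructor
      · rintro ⟨w, hw, rfl⟩
        rwa [ttop_cancel]
      · intro h
        exact ⟨ttop ρ x y, h, ttop_cancel ρ x y⟩
    have hWmul : ∀ w ∈ W, ∀ w' ∈ W, ttop ρ w w' ∈ W := by
      intro w hw w' hw'
      have hSw : (fun y => ttop ρ w y) '' W = W := huniq w _ W (hSB w) (hxS w) hW.1 hw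
      rw [← hSw]
      exact ⟨w', hw', rfl⟩
    have step : ∀ γ ∈ Subgroup.closure ({feistelPerm ρ} ∪
        {g : Equiv.Perm ((Fin n → ZMod 2) × (Fin n → ZMod 2)) |
          ∃ k : Fin n → ZMod 2, g = Equiv.addRight ((0 : Fin n → ZMod 2), k)}),
        ∀ x y, ttop ρ x y ∈ W → ttop ρ (γ x) (γ y) ∈ W := by
      intro γ hγ x y h
      have h1 := hinv _ (hSB x) γ hγ
      have h2 : ⇑γ '' ((fun z => ttop ρ x z) '' W) = (fun z => ttop ρ (γ x) z) '' W :=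
        huniq (γ x) _ _ h1 ⟨x, hxS x, rfl⟩ (hSB (γ x)) (hxS (γ x))
      have h3 : γ y ∈ (fun z => ttop ρ (γ x) z) '' W := by
        rw [← h2]; exact ⟨y, (hmemS x y).mpr h, rfl⟩
      exact (hmemS _ _).mp h3
    -- key structural facts about W
    have F4 : ∀ w ∈ W, ((w.2 : Fin n → ZMod 2), w.1 + ρ w.2 + ρ 0) ∈ W := by
      intro w hw
      have h := step (feistelPerm ρ) hfmem 0 w (by rw [ttop_zero']; exact hw)
      simpa [ttop, feistel_apply, Prod.ext_iff, add_assoc, add_comm, add_left_comm, hh2, hh2']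
        using h
    have F5 : ∀ w ∈ W, ((w.2 + ρ w.1 + ρ 0 : Fin n → ZMod 2), w.1) ∈ W := by
      intro w hw
      have h := step (feistelPerm ρ)⁻¹ (inv_mem hfmem) ((0 : Fin n → ZMod 2), ρ 0)
        (ttop ρ ((0 : Fin n → ZMod 2), ρ 0) w) (by rw [ttop_cancel]; exact hw)
      simpa [ttop, feistel_inv_apply, Prod.ext_iff, add_assoc, add_comm, add_left_comm, hh2, hh2']
        using h
    have Fss : ∀ w ∈ W, ∀ c : Fin n → ZMod 2,
        ((w.2 + ρ w.1 + ρ 0 : Fin n → ZMod 2),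
          w.1 + ρ c + ρ (c + (w.2 + ρ w.1 + ρ 0)) + ρ (w.2 + ρ w.1 + ρ 0) + ρ 0) ∈ W := by
      intro w hw c
      have h := step (feistelPerm ρ)⁻¹ (inv_mem hfmem) ((0 : Fin n → ZMod 2), c + ρ 0)
        (ttop ρ ((0 : Fin n → ZMod 2), c + ρ 0) w) (by rw [ttop_cancel]; exact hw)
      simpa [ttop, feistel_inv_apply, Prod.ext_iff, add_assoc, add_comm, add_left_comm, hh2, hh2']
        using h
    have hUF2 : ∀ u : Fin n → ZMod 2, ((0 : Fin n → ZMod 2), u) ∈ W →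
        ((u : Fin n → ZMod 2), (0 : Fin n → ZMod 2)) ∈ W := by
      intro u hu
      have h := F5 ((0 : Fin n → ZMod 2), u) hu
      simpa [add_assoc, add_comm, add_left_comm, hh2, hh2'] using h
    have hF1 : ∀ u : Fin n → ZMod 2, ((0 : Fin n → ZMod 2), u) ∈ W →
        ((u : Fin n → ZMod 2), ρ u + ρ 0) ∈ W := by
      intro u hu
      have h := step (feistelPerm ρ) hfmem 0 ((0 : Fin n → ZMod 2), u)
        (by rw [ttop_zero']; exact hu)
      simpa [ttop, feistel_apply, Prod.ext_iff, add_assoc, add_comm, add_left_comm, hh2, hh2']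
        using h
    have hF3 : ∀ u : Fin n → ZMod 2, ((0 : Fin n → ZMod 2), u) ∈ W →
        ((0 : Fin n → ZMod 2), ρ u + ρ 0) ∈ W := by
      intro u hu
      have h := hWmul _ (hUF2 u hu) _ (hF1 u hu)
      simpa [ttop, Prod.ext_iff, add_assoc, add_comm, add_left_comm, hh2, hh2'] using h
    have hF6 : ∀ p q : Fin n → ZMod 2, (p, q) ∈ W → ∀ c : Fin n → ZMod 2,
        ((0 : Fin n → ZMod 2), ρ c + ρ (c + p) + ρ p + ρ 0) ∈ W := by
      intro p q hpq c
      have h4 := F4 (p, q) hpq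
      have hss := Fss (q, p + ρ q + ρ 0) h4 c
      have hss' : ((p : Fin n → ZMod 2), q + (ρ c + ρ (c + p) + ρ p + ρ 0)) ∈ W := by
        simpa [add_assoc, add_comm, add_left_comm, hh2, hh2'] using hss
      have h := hWmul _ hpq _ hss'
      simpa [ttop, Prod.ext_iff, add_assoc, add_comm, add_left_comm, hh2, hh2'] using h
    -- first component subgroup facts
    have hfst : ∀ x : (Fin n → ZMod 2) × (Fin n → ZMod 2), x ∈ W →
        ∀ a : Fin n → ZMod 2, x.1 = a → ∃ r, (a, r) ∈ W := by
      rintro x hx a rfl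
      exact ⟨x.2, by rwa [Prod.mk.eta]⟩
    have hF7 : ∀ p q : Fin n → ZMod 2, (p, q) ∈ W → ∃ r, (ρ p + ρ 0, r) ∈ W := by
      intro p q hpq
      have h5 := F5 (p, q) hpq
      have h4 := F4 (p, q) hpq
      have h := hWmul _ h5 _ h4
      refine hfst _ h _ ?_
      simp [ttop, add_assoc, add_comm, add_left_comm, hh2, hh2']
    -- the "no nontrivial invariant subspace" principle on V
    have noBlocks : ∀ S : Set (Fin n → ZMod 2), (0 : Fin n → ZMod 2) ∈ S →
        (∀ a ∈ S, ∀ b ∈ S, a + b ∈ S) →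
        (∀ a p, p ∈ S → ρ a + ρ (a + p) ∈ S) → S = {0} ∨ S = Set.univ := by
      intro S h0 hadd hc
      by_contra hcon
      push_neg at hcon
      let P : Submodule (ZMod 2) (Fin n → ZMod 2) :=
        { carrier := S
          zero_mem' := h0
          add_mem' := fun ha hb => hadd _ ha _ hb
          smul_mem' := by
            intro c x hx
            fin_cases c
            · change (0 : ZMod 2) • x ∈ S; simpa using h0
            · change (1 : ZMod 2) • x ∈ S; simpa using hx }
      have hP0 : P ≠ ⊥ := by
        intro he
        apply hcon.1
        have : (P : Set (Fin n → ZMod 2)) = {0} := by rw [he]; simp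
        exact this
      have hP1 : P ≠ ⊤ := by
        intro he
        apply hcon.2
        have : (P : Set (Fin n → ZMod 2)) = Set.univ := by rw [he]; simp
        exact this
      obtain ⟨B', hB'⟩ := exists_blockSystem ρ P hc hP0 hP1
      exact hprim.2 ⟨B', hB'⟩
    -- apply to the first-projection of W
    have hP10 : (0 : Fin n → ZMod 2) ∈ {p : Fin n → ZMod 2 | ∃ q, (p, q) ∈ W} := ⟨0, hW00⟩
    have hP1add : ∀ a ∈ {p : Fin n → ZMod 2 | ∃ q, (p, q) ∈ W},
        ∀ b ∈ {p : Fin n → ZMod 2 | ∃ q, (p, q) ∈ W},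
        a + b ∈ {p : Fin n → ZMod 2 | ∃ q, (p, q) ∈ W} := by
      rintro a ⟨qa, ha⟩ b ⟨qb, hb⟩
      have h := hWmul _ ha _ hb
      exact hfst _ h _ rfl
    have hcomp1 : ∀ a p, p ∈ {p : Fin n → ZMod 2 | ∃ q, (p, q) ∈ W} →
        ρ a + ρ (a + p) ∈ {p : Fin n → ZMod 2 | ∃ q, (p, q) ∈ W} := by
      rintro a p ⟨q, hpq⟩
      have hD := hF6 p q hpq a
      obtain ⟨r, hr⟩ := hF7 p q hpq
      have hDm : ρ a + ρ (a + p) + ρ p + ρ 0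
          ∈ {p : Fin n → ZMod 2 | ∃ q, (p, q) ∈ W} := ⟨_, hUF2 _ hD⟩
      obtain ⟨r2, hr2⟩ := hDm
      have h := hWmul _ hr2 _ hr
      refine hfst _ h _ ?_
      simp [ttop, add_assoc, add_comm, add_left_comm, hh2, hh2']
    rcases noBlocks {p : Fin n → ZMod 2 | ∃ q, (p, q) ∈ W} hP10 hP1add hcomp1 with hbot | htop
    · -- W = {0} : blocks are singletons
      have hWsub : ∀ w ∈ W, w = (0 : (Fin n → ZMod 2) × (Fin n → ZMod 2)) := by
        intro w hw
        have h1 : w.1 ∈ ({0} : Set (Fin n → ZMod 2)) := by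
          rw [← hbot]; exact ⟨w.2, by rwa [Prod.mk.eta]⟩
        have h2 : w.2 ∈ ({0} : Set (Fin n → ZMod 2)) := by
          rw [← hbot]; exact ⟨_, F4 w hw⟩
        rw [Set.mem_singleton_iff] at h1 h2
        exact Prod.ext h1 h2
      have hsing : ∀ x, (fun z => ttop ρ x z) '' W = {x} := by
        intro x
        ext z
        simp only [Set.mem_image, Set.mem_singleton_iff]
        constructor
        · rintro ⟨w, hw, rfl⟩
          rw [hWsub w hw, ttop_zero]
        · rintro rfl
          exact ⟨0, hW.2, ttop_zero ρ z⟩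
      apply hBsing
      ext b
      simp only [Set.mem_setOf_eq]
      constructor
      · intro hb
        obtain ⟨x, hx⟩ := Set.nonempty_iff_ne_empty.mpr (fun he => hne (he ▸ hb))
        have hbS : b = (fun z => ttop ρ x z) '' W := huniq x _ _ hb hx (hSB x) (hxS x)
        exact ⟨x, by rw [hbS, hsing]⟩
      · rintro ⟨x, rfl⟩
        rw [← hsing x]
        exact hSB x
    · -- first projection is everything
      have hP1' : ∀ p : Fin n → ZMod 2, ∃ q, (p, q) ∈ W := by
        intro p
        have : p ∈ {p : Fin n → ZMod 2 | ∃ q, (p, q) ∈ W} := by rw [htop]; trivial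
        exact this
      have hU0 : (0 : Fin n → ZMod 2) ∈ {u : Fin n → ZMod 2 |
          ((0 : Fin n → ZMod 2), u) ∈ W} := hW00
      have hUadd : ∀ a ∈ {u : Fin n → ZMod 2 | ((0 : Fin n → ZMod 2), u) ∈ W},
          ∀ b ∈ {u : Fin n → ZMod 2 | ((0 : Fin n → ZMod 2), u) ∈ W},
          a + b ∈ {u : Fin n → ZMod 2 | ((0 : Fin n → ZMod 2), u) ∈ W} := by
      -- via hWmul
        intro a ha b hb
        have h := hWmul _ ha _ hb
        have e : ttop ρ ((0 : Fin n → ZMod 2), a) ((0 : Fin n → ZMod 2), b)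
            = ((0 : Fin n → ZMod 2), a + b) := by
          simp [ttop, Prod.ext_iff, add_assoc, add_comm, add_left_comm, hh2, hh2']
        rwa [e] at h
      have hcomp2 : ∀ a u, u ∈ {u : Fin n → ZMod 2 | ((0 : Fin n → ZMod 2), u) ∈ W} →
          ρ a + ρ (a + u) ∈ {u : Fin n → ZMod 2 | ((0 : Fin n → ZMod 2), u) ∈ W} := by
        intro a u hu
        obtain ⟨q, hq⟩ := hP1' u
        have hD := hF6 u q hq a
        have h3 := hF3 u hu
        have h := hWmul _ hD _ h3
        have e : ttop ρ ((0 : Fin n → ZMod 2), ρ a + ρ (a + u) + ρ u + ρ 0)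
            ((0 : Fin n → ZMod 2), ρ u + ρ 0)
            = ((0 : Fin n → ZMod 2), ρ a + ρ (a + u)) := by
          simp [ttop, Prod.ext_iff, add_assoc, add_comm, add_left_comm, hh2, hh2']
        rwa [e] at h
      rcases noBlocks {u : Fin n → ZMod 2 | ((0 : Fin n → ZMod 2), u) ∈ W} hU0 hUadd hcomp2
        with hUbot | hUtop
      · -- ρ is affine: contradiction
        have hDzero : ∀ c p : Fin n → ZMod 2, ρ c + ρ (c + p) + ρ p + ρ 0 = 0 := by
          intro c p
          obtain ⟨q, hq⟩ := hP1' p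
          have hD := hF6 p q hq c
          have : ρ c + ρ (c + p) + ρ p + ρ 0 ∈ ({0} : Set (Fin n → ZMod 2)) := by
            rw [← hUbot]; exact hD
          simpa using this
        refine hρ ⟨{ toFun := fun x => ρ x + ρ 0, map_add' := ?_, map_smul' := ?_ }, ρ 0, ?_⟩
        · intro a b
          have h2 : ρ (a + b) = ρ a + ρ b + ρ 0 := by
            have := congrArg (fun t => t + (ρ a + ρ b + ρ 0)) (hDzero a b)
            simpa [add_assoc, add_comm, add_left_comm, hh2, hh2'] using this
          show ρ (a + b) + ρ 0 = (ρ a + ρ 0) + (ρ b + ρ 0)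
          rw [h2]
          simp [add_assoc, add_comm, add_left_comm, hh2, hh2']
        · intro c x
          fin_cases c
          · change ρ ((0 : ZMod 2) • x) + ρ 0 = (0 : ZMod 2) • (ρ x + ρ 0); simp [hh2]
          · change ρ ((1 : ZMod 2) • x) + ρ 0 = (1 : ZMod 2) • (ρ x + ρ 0); simp
        · intro x
          show ρ x = (ρ x + ρ 0) + ρ 0
          rw [add_assoc, hh2, add_zero]
      · -- W = univ : B = {univ}
        have hWuniv : ∀ x : (Fin n → ZMod 2) × (Fin n → ZMod 2), x ∈ W := by
          intro x
          obtain ⟨q, hq⟩ := hP1' x.1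
          have hu : ((0 : Fin n → ZMod 2), q + x.2) ∈ W := by
            have : q + x.2 ∈ {u : Fin n → ZMod 2 | ((0 : Fin n → ZMod 2), u) ∈ W} := by
              rw [hUtop]; trivial
            exact this
          have h := hWmul _ hq _ hu
          have e : ttop ρ (x.1, q) ((0 : Fin n → ZMod 2), q + x.2) = x := by
            have : ((x.1 : Fin n → ZMod 2), (x.2 : Fin n → ZMod 2)) = x := Prod.mk.eta
            rw [← this]
            simp [ttop, Prod.ext_iff, add_assoc, add_comm, add_left_comm, hh2, hh2']
          rwa [e] at h
        apply hBuniv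
        ext b
        simp only [Set.mem_singleton_iff]
        constructor
        · intro hb
          obtain ⟨x, hx⟩ := Set.nonempty_iff_ne_empty.mpr (fun he => hne (he ▸ hb))
          have : b = W := huniq x b W hb hx hW.1 (hWuniv x)
          rw [this]
          exact Set.eq_univ_of_forall hWuniv
        · rintro rfl
          rw [← Set.eq_univ_of_forall hWuniv]
          exact hW.1
end

section
/- Let ρ = γλ ∈ Sym(V) with γ: V → W injective and λ: W → V linear surjective, and let T_n be the translation group of V = (F_2)^n. Then ⟨T_n, ρ⟩ is imprimitive if and only if there exists a proper non-trivial additive subgroup U of V such that γ(u+v) + γ(v) ∈ λ⁻¹(U) for all u ∈ U and v ∈ V; in that case the cosets {U + v | v ∈ V} form a block system for ⟨T_n, ρ⟩. -/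
section Aux

variable {n : ℕ}

lemma aux_add_self (a : Fin n → ZMod 2) : a + a = 0 := by
  funext i
  exact CharTwo.add_self_eq_zero (a i)

lemma aux_cancel (a b c : Fin n → ZMod 2) : a + b + (b + c) = a + c := by
  rw [show a + b + (b + c) = a + (b + b) + c by ring, aux_add_self, add_zero]

lemma aux_cancel' (a b : Fin n → ZMod 2) : a + b + b = a := by
  rw [add_assoc, aux_add_self, add_zero]

lemma aux_neg (a : Fin n → ZMod 2) : -a = a := by
  rw [neg_eq_iff_add_eq_zero, aux_add_self]

/-- inverse-closure from finiteness -/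
lemma aux_inv_mem {M : Type*} [Finite M] (B : Set (Set M)) (g : Equiv.Perm M)
    (h : ∀ b ∈ B, g '' b ∈ B) : ∀ b ∈ B, ⇑g⁻¹ '' b ∈ B := by
  have hinj : Function.Injective (fun b : B => (⟨g '' b, h b b.2⟩ : B)) := by
    intro b1 b2 hb
    have h2 : g '' (b1 : Set M) = g '' (b2 : Set M) := congrArg Subtype.val hb
    exact Subtype.ext (Set.image_injective.mpr g.injective h2)
  have hsurj := Finite.injective_iff_surjective.mp hinj
  intro b hb
  obtain ⟨c, hc⟩ := hsurj ⟨b, hb⟩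
  have hc' : g '' (c : Set M) = b := congrArg Subtype.val hc
  have : ⇑g⁻¹ '' b = c := by
    rw [← hc', ← Set.image_comp]
    simp
  rw [this]; exact c.2

end Aux

/-- ⟨T_n, ρ⟩ with ρ = γλ is imprimitive iff there is a proper
    non-trivial subgroup U of V with γ(u+v) + γ(v) ∈ λ⁻¹(U) for all u ∈ U, v ∈ V;
    in that case the cosets of U form a block system. -/
theorem stmt_14 {n : ℕ} {W : Type*} [AddCommGroup W] [Module (ZMod 2) W] [Fintype W]
    (γ : (Fin n → ZMod 2) → W) (hγ : Function.Injective γ)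
    (lam : W →ₗ[ZMod 2] (Fin n → ZMod 2)) (hlam : Function.Surjective lam)
    (hbij : Function.Bijective (fun x : Fin n → ZMod 2 => lam (γ x)))
    (Γ : Subgroup (Equiv.Perm (Fin n → ZMod 2)))
    (hΓ : Γ = Subgroup.closure ({Equiv.ofBijective _ hbij} ∪
      {g : Equiv.Perm (Fin n → ZMod 2) | ∃ k : Fin n → ZMod 2, g = Equiv.addRight k})) :
    ((∃ B, IsBlockSystem Γ B) ↔
      ∃ U : AddSubgroup (Fin n → ZMod 2), U ≠ ⊥ ∧ U ≠ ⊤ ∧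
        ∀ u ∈ U, ∀ v : Fin n → ZMod 2, γ (u + v) + γ v ∈ lam ⁻¹' (U : Set (Fin n → ZMod 2))) ∧
    (∀ U : AddSubgroup (Fin n → ZMod 2), U ≠ ⊥ → U ≠ ⊤ →
      (∀ u ∈ U, ∀ v : Fin n → ZMod 2, γ (u + v) + γ v ∈ lam ⁻¹' (U : Set (Fin n → ZMod 2))) →
      IsBlockSystem Γ {B | ∃ v : Fin n → ZMod 2, B = (· + v) '' (U : Set (Fin n → ZMod 2))}) := by
  set ρ : Equiv.Perm (Fin n → ZMod 2) := Equiv.ofBijective _ hbij with hρ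
  have hρapp : ∀ x, ρ x = lam (γ x) := fun x => rfl
  have hρmem : ρ ∈ Γ := by
    rw [hΓ]; exact Subgroup.subset_closure (Or.inl rfl)
  have htmem : ∀ k : Fin n → ZMod 2, Equiv.addRight k ∈ Γ := fun k => by
    rw [hΓ]; exact Subgroup.subset_closure (Or.inr ⟨k, rfl⟩)
  -- second part first
  have main : ∀ U : AddSubgroup (Fin n → ZMod 2), U ≠ ⊥ → U ≠ ⊤ →
      (∀ u ∈ U, ∀ v : Fin n → ZMod 2, γ (u + v) + γ v ∈ lam ⁻¹' (U : Set (Fin n → ZMod 2))) →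
      IsBlockSystem Γ {B | ∃ v : Fin n → ZMod 2, B = (· + v) '' (U : Set (Fin n → ZMod 2))} := by
    intro U hUbot hUtop hU
    set B : Set (Set (Fin n → ZMod 2)) :=
      {B | ∃ v : Fin n → ZMod 2, B = (· + v) '' (U : Set (Fin n → ZMod 2))} with hB
    have memcoset : ∀ (v x : Fin n → ZMod 2),
        x ∈ (· + v) '' (U : Set (Fin n → ZMod 2)) ↔ x + v ∈ U := by
      intro v x
      constructor
      · rintro ⟨u, hu, rfl⟩
        simpa [aux_cancel'] using hu
      · intro h
        exact ⟨x + v, h, aux_cancel' x v⟩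
    have coset_eq : ∀ (v w : Fin n → ZMod 2), v + w ∈ U →
        (· + v) '' (U : Set (Fin n → ZMod 2)) = (· + w) '' (U : Set (Fin n → ZMod 2)) := by
      intro v w hvw
      ext x
      rw [memcoset, memcoset]
      constructor
      · intro h
        have := U.add_mem h hvw
        rwa [aux_cancel] at this
      · intro h
        have hwv : w + v ∈ U := by rw [add_comm]; exact hvw
        have := U.add_mem h hwv
        rwa [aux_cancel] at this
    -- ρ maps cosets to cosets
    have hρsub : ∀ v : Fin n → ZMod 2,
        ρ '' ((· + v) '' (U : Set (Fin n → ZMod 2)))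
          ⊆ (· + ρ v) '' (U : Set (Fin n → ZMod 2)) := by
      intro v x hx
      obtain ⟨y, hy, rfl⟩ := hx
      rw [memcoset] at hy
      rw [memcoset]
      have := hU (y + v) hy v
      simp only [Set.mem_preimage, map_add] at this
      rw [aux_cancel'] at this
      rw [hρapp, hρapp]
      exact this
    have hρcoset : ∀ v : Fin n → ZMod 2,
        ρ '' ((· + v) '' (U : Set (Fin n → ZMod 2)))
          = (· + ρ v) '' (U : Set (Fin n → ZMod 2)) := by
      intro v
      apply Set.eq_of_subset_of_ncard_le (hρsub v) _ (Set.toFinite _)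
      rw [Set.ncard_image_of_injective _ ρ.injective,
        Set.ncard_image_of_injective _ (add_left_injective v),
        Set.ncard_image_of_injective _ (add_left_injective (ρ v))]
    have htcoset : ∀ k v : Fin n → ZMod 2,
        ⇑(Equiv.addRight k) '' ((· + v) '' (U : Set (Fin n → ZMod 2)))
          = (· + (v + k)) '' (U : Set (Fin n → ZMod 2)) := by
      intro k v
      rw [← Set.image_comp]
      congr 1
      funext x
      simp [add_assoc]
    refine ⟨⟨?_, ?_⟩, ?_, ?_, ?_⟩
    · -- ∅ ∉ B
      rintro ⟨v, hv⟩
      have : v ∈ (∅ : Set (Fin n → ZMod 2)) := by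
        rw [hv, memcoset]
        simpa [aux_add_self] using U.zero_mem
      exact this
    · -- ∃!
      intro a
      refine ⟨(· + a) '' (U : Set (Fin n → ZMod 2)), ⟨⟨a, rfl⟩, ?_⟩, ?_⟩
      · rw [memcoset]; simpa [aux_add_self] using U.zero_mem
      · rintro b ⟨⟨w, rfl⟩, hab⟩
        rw [memcoset] at hab
        exact (coset_eq a w hab).symm
    · -- invariance
      intro b hb g hg
      set H : Subgroup (Equiv.Perm (Fin n → ZMod 2)) :=
        { carrier := {g : Equiv.Perm (Fin n → ZMod 2) | ∀ b ∈ B, ⇑g '' b ∈ B}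
          one_mem' := by intro b hb; simpa using hb
          mul_mem' := by
            intro g h hg hh b hb
            have : ⇑(g * h) '' b = ⇑g '' (⇑h '' b) := by
              rw [← Set.image_comp]; rfl
            rw [this]
            exact hg _ (hh _ hb)
          inv_mem' := by
            intro g hg
            exact aux_inv_mem B g hg } with hH
      have hle : Γ ≤ H := by
        rw [hΓ]
        apply Subgroup.closure_le H |>.mpr
        rintro g (rfl | ⟨k, rfl⟩)
        · rintro b ⟨v, rfl⟩
          exact ⟨ρ v, hρcoset v⟩
        · rintro b ⟨v, rfl⟩
          exact ⟨v + k, htcoset k v⟩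
      exact hle hg b hb
    · -- B ≠ {univ}
      intro h
      have hmem : (· + (0 : Fin n → ZMod 2)) '' (U : Set (Fin n → ZMod 2)) ∈ B := ⟨0, rfl⟩
      rw [h] at hmem
      apply hUtop
      rw [AddSubgroup.eq_top_iff']
      intro x
      have : x ∈ (· + (0 : Fin n → ZMod 2)) '' (U : Set (Fin n → ZMod 2)) := by
        rw [hmem]; trivial
      rw [memcoset, add_zero] at this
      exact this
    · -- B ≠ singletons
      intro h
      have hmem : (· + (0 : Fin n → ZMod 2)) '' (U : Set (Fin n → ZMod 2)) ∈ B := ⟨0, rfl⟩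
      rw [h] at hmem
      obtain ⟨x, hx⟩ := hmem
      apply hUbot
      rw [AddSubgroup.eq_bot_iff_forall]
      intro u hu
      have h0 : (0 : Fin n → ZMod 2) ∈ (· + (0 : Fin n → ZMod 2)) '' (U : Set (Fin n → ZMod 2)) := by
        rw [memcoset]; simpa [aux_add_self] using U.zero_mem
      have hu' : u ∈ (· + (0 : Fin n → ZMod 2)) '' (U : Set (Fin n → ZMod 2)) := by
        rw [memcoset, add_zero]; exact hu
      rw [hx] at h0 hu'
      simp only [Set.mem_singleton_iff] at h0 hu'
      rw [hu', ← h0]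
  refine ⟨⟨?_, ?_⟩, main⟩
  · -- forward direction
    rintro ⟨B, ⟨⟨hne, hpart⟩, hinv, hBuniv, hBsing⟩⟩
    obtain ⟨b0, ⟨hb0B, hb00⟩, huniq0⟩ := hpart 0
    -- the block containing a point is unique
    have blocks_eq : ∀ b ∈ B, ∀ b' ∈ B, ∀ x, x ∈ b → x ∈ b' → b = b' := by
      intro b hb b' hb' x hxb hxb'
      obtain ⟨c, _, huniq⟩ := hpart x
      rw [huniq b ⟨hb, hxb⟩, huniq b' ⟨hb', hxb'⟩]
    -- translated blocks
    have htrans : ∀ v : Fin n → ZMod 2, (· + v) '' b0 ∈ B := by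
      intro v
      have := hinv b0 hb0B (Equiv.addRight v) (htmem v)
      simpa using this
    have hvmem : ∀ v : Fin n → ZMod 2, v ∈ (· + v) '' b0 :=
      fun v => ⟨0, hb00, by simp⟩
    -- b0 is the block containing any of its points… closure under addition:
    have hadd : ∀ a ∈ b0, ∀ b ∈ b0, a + b ∈ b0 := by
      intro a ha b hb
      have heq : (· + b) '' b0 = b0 := blocks_eq _ (htrans b) _ hb0B b (hvmem b) hb
      rw [← heq]
      exact ⟨a, ha, rfl⟩
    set U : AddSubgroup (Fin n → ZMod 2) :=
      { carrier := b0
        zero_mem' := hb00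
        add_mem' := fun {a b} ha hb => hadd a ha b hb
        neg_mem' := fun {a} ha => by rwa [aux_neg] } with hUdef
    refine ⟨U, ?_, ?_, ?_⟩
    · -- U ≠ ⊥
      intro hbot
      apply hBsing
      have hb0eq : b0 = {0} := by
        have : (U : Set (Fin n → ZMod 2)) = ((⊥ : AddSubgroup (Fin n → ZMod 2)) :
            Set (Fin n → ZMod 2)) := by rw [hbot]
        have h' : (U : Set (Fin n → ZMod 2)) = {0} := by simpa using this
        exact h'
      ext b
      simp only [Set.mem_setOf_eq]
      constructor
      · intro hb
        obtain ⟨x, hx⟩ := Set.nonempty_iff_ne_empty.mpr (fun h => hne (h ▸ hb))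
        refine ⟨x, ?_⟩
        have := blocks_eq b hb _ (htrans x) x hx (hvmem x)
        rw [this, hb0eq]
        ext y
        simp
      · rintro ⟨x, rfl⟩
        have := htrans x
        rw [hb0eq] at this
        simpa using this
    · -- U ≠ ⊤
      intro htop
      apply hBuniv
      have hb0eq : b0 = Set.univ := by
        rw [show b0 = (U : Set (Fin n → ZMod 2)) from rfl, htop, AddSubgroup.coe_top]
      ext b
      simp only [Set.mem_singleton_iff]
      constructor
      · intro hb
        obtain ⟨x, hx⟩ := Set.nonempty_iff_ne_empty.mpr (fun h => hne (h ▸ hb))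
        have := blocks_eq b hb _ (htrans x) x hx (hvmem x)
        rw [this, hb0eq]
        simp [Set.image_univ]
        exact Set.eq_univ_of_forall fun y => ⟨y + x, by simp [aux_cancel']⟩
      · rintro rfl
        rw [← hb0eq]
        exact hb0B
    · -- the condition
      intro u hu v
      have huU : u ∈ b0 := hu
      -- ρ '' (block of v) is a block containing ρ v; so is (· + ρ v) '' b0
      have h1 : ρ '' ((· + v) '' b0) ∈ B := hinv _ (htrans v) ρ hρmem
      have h2 : ρ v ∈ ρ '' ((· + v) '' b0) := ⟨v, hvmem v, rfl⟩
      have h3 : ρ v ∈ (· + ρ v) '' b0 := hvmem (ρ v)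
      have heq : ρ '' ((· + v) '' b0) = (· + ρ v) '' b0 :=
        blocks_eq _ h1 _ (htrans (ρ v)) (ρ v) h2 h3
      have h4 : ρ (u + v) ∈ (· + ρ v) '' b0 := by
        rw [← heq]
        exact ⟨u + v, ⟨u, huU, rfl⟩, rfl⟩
      obtain ⟨w, hw, hweq⟩ := h4
      have hwval : w = ρ (u + v) + ρ v := by
        rw [← hweq, aux_cancel']
      rw [hwval] at hw
      simp only [Set.mem_preimage, map_add, SetLike.mem_coe]
      rw [hρapp, hρapp] at hw
      exact hw
  · rintro ⟨U, h1, h2, h3⟩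
    exact ⟨_, main U h1 h2 h3⟩
end

section
/- Let V = ⊕_{j=1}^b V_j with V_j = (F_2)^s, W = ⊕_{j=1}^b W_j with W_j = (F_2)^t, s ≤ t, and let ρ = γλ ∈ Sym(V) be the generating function of a wave cipher, where γ acts in parallel as S-boxes γ_j: V_j → W_j with γ_j(0)=0, and λ: W → V is a proper surjective diffusion layer with parallel kernel Ker λ = ⊕_j (Ker λ ∩ W_j). If there is 1 ≤ δ < s such that each γ_j is 2^δ-differentially uniform and δ-non-invariant with respect to λ, then ⟨T_n, ρ⟩ is primitive on V. -/
lemma vec_add_self {m : ℕ} (x : Fin m → ZMod 2) : x + x = 0 :=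
  funext fun _ => CharTwo.add_self_eq_zero _

lemma mat_add_self {n m : ℕ} (x : Fin n → Fin m → ZMod 2) : x + x = 0 :=
  funext fun _ => vec_add_self _

lemma mat_neg_self {n m : ℕ} (x : Fin n → Fin m → ZMod 2) : -x = x := by
  funext i j
  exact CharTwo.neg_eq _

lemma aux_natcard_filter {α : Type*} [Fintype α] (p : α → Prop) [DecidablePred p] :
    Nat.card {x | p x} = (Finset.univ.filter p).card := by
  rw [Nat.card_eq_fintype_card]
  convert Fintype.card_subtype p
  exact Iff.rfl

lemma aux_card_le {α β : Type*} [Fintype α] [Finite β] [DecidableEq β] (f : α → β) (T : Set β)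
    (hT : ∀ a, f a ∈ T) (m : ℕ)
    (hm : ∀ v : β, (Finset.univ.filter fun x => f x = v).card ≤ m) :
    Fintype.card α ≤ m * Nat.card T := by
  classical
  have h1 : (Finset.univ : Finset α).card ≤ m * (Finset.univ.image f).card :=
    Finset.card_le_mul_card_image Finset.univ m fun a _ => hm a
  have hTfin : T.Finite := Set.toFinite T
  have h2 : (Finset.univ.image f) ⊆ hTfin.toFinset := by
    intro v hv
    rcases Finset.mem_image.mp hv with ⟨a, -, rfl⟩
    simpa using hT a
  have h3 : (Finset.univ.image f).card ≤ Nat.card T := by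
    rw [Nat.card_eq_card_finite_toFinset hTfin]
    exact Finset.card_le_card h2
  calc Fintype.card α = (Finset.univ : Finset α).card := Finset.card_univ.symm
    _ ≤ m * (Finset.univ.image f).card := h1
    _ ≤ m * Nat.card T := Nat.mul_le_mul_left m h3

lemma aux_card_submodule {t : ℕ} (W' : Submodule (ZMod 2) (Fin t → ZMod 2)) :
    Nat.card W' = 2 ^ Module.finrank (ZMod 2) W' := by
  have : Fintype W' := Fintype.ofFinite _
  rw [Nat.card_eq_fintype_card, Module.card_eq_pow_finrank (K := ZMod 2) (V := W'), ZMod.card]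



/-- The differential uniformity of a vectorial Boolean function. -/
noncomputable def diffUnif {s t : ℕ} (f : (Fin s → ZMod 2) → (Fin t → ZMod 2)) : ℕ :=
  sSup {d : ℕ | ∃ u : Fin s → ZMod 2, u ≠ 0 ∧
    ∃ v : Fin t → ZMod 2, d = Nat.card {x : Fin s → ZMod 2 | f x + f (x + u) = v}}

variable {b s t : ℕ}

/-- The element of `W = (F₂ᵗ)ᵇ` supported on the `j`-th brick with value `v`. -/
def embedBrick (j : Fin b) (v : Fin t → ZMod 2) : Fin b → Fin t → ZMod 2 :=
  fun i => if i = j then v else 0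


lemma embedBrick_eq_single {b t : ℕ} (j : Fin b) (v : Fin t → ZMod 2) :
    embedBrick j v = Pi.single j v := by
  funext i
  by_cases h : i = j
  · subst h; simp [embedBrick]
  · simp [embedBrick, h, Pi.single_eq_of_ne h]

/-- `λ : W → V` is a proper diffusion layer: for no pair of corresponding walls
    `W' = ⊕_{j∈I} W_j`, `V' = ⊕_{j∈I} V_j` does `λ⁻¹(V') ⊆ W' + Ker λ` hold. -/
def ProperDiffusion (lam : (Fin b → Fin t → ZMod 2) →ₗ[ZMod 2] (Fin b → Fin s → ZMod 2)) :
    Prop :=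
  ∀ I : Finset (Fin b), I.Nonempty → I ≠ Finset.univ →
    ¬ (lam ⁻¹' {v : Fin b → Fin s → ZMod 2 | ∀ j ∉ I, v j = 0} ⊆
      {w : Fin b → Fin t → ZMod 2 | ∃ w' : Fin b → Fin t → ZMod 2, (∀ j ∉ I, w' j = 0) ∧
        ∃ z ∈ LinearMap.ker lam, w = w' + z})

/-- The S-box `γⱼ` is `δ`-non-invariant w.r.t. `λ`: for all proper subspaces
    `V' < V_j`, `W' < W_j` with `γ_j(V') + (Ker λ ∩ W_j) = W'`, `dim W' < s − δ`. -/
def NonInvariant (lam : (Fin b → Fin t → ZMod 2) →ₗ[ZMod 2] (Fin b → Fin s → ZMod 2))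
    (γj : (Fin s → ZMod 2) → (Fin t → ZMod 2)) (j : Fin b) (δ : ℕ) : Prop :=
  ∀ (V' : Submodule (ZMod 2) (Fin s → ZMod 2)) (W' : Submodule (ZMod 2) (Fin t → ZMod 2)),
    V' ≠ ⊤ → W' ≠ ⊤ →
    {x : Fin t → ZMod 2 | ∃ a ∈ V', ∃ c : Fin t → ZMod 2,
        embedBrick j c ∈ LinearMap.ker lam ∧ x = γj a + c} = (W' : Set (Fin t → ZMod 2)) →
    Module.finrank (ZMod 2) W' < s - δ

/-- if every S-box is `2^δ`-differentially uniform and `δ`-non-invariant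
    w.r.t. a proper diffusion layer `λ` with parallel kernel, then `⟨T_n, ρ⟩` is
    primitive, where `ρ = γλ` is the (bijective) generating function. -/
theorem stmt_15 (hst : s ≤ t) (δ : ℕ) (hδ1 : 1 ≤ δ) (hδs : δ < s)
    (γS : Fin b → (Fin s → ZMod 2) → (Fin t → ZMod 2))
    (hinj : ∀ j, Function.Injective (γS j)) (h0 : ∀ j, γS j 0 = 0)
    (lam : (Fin b → Fin t → ZMod 2) →ₗ[ZMod 2] (Fin b → Fin s → ZMod 2))
    (hsurj : Function.Surjective lam) (hproper : ProperDiffusion lam)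
    (hker : ∀ w ∈ LinearMap.ker lam, ∀ j, embedBrick j (w j) ∈ LinearMap.ker lam)
    (hdu : ∀ j, diffUnif (γS j) = 2 ^ δ)
    (hni : ∀ j, NonInvariant lam (γS j) j δ)
    (hbij : Function.Bijective
      (fun x : Fin b → Fin s → ZMod 2 => lam (fun j => γS j (x j)))) :
    IsPrimitiveSub (Subgroup.closure ({Equiv.ofBijective _ hbij} ∪
      {g : Equiv.Perm (Fin b → Fin s → ZMod 2) |
        ∃ k : Fin b → Fin s → ZMod 2, g = Equiv.addRight k})) := by
  classical
  constructor
  · -- transitivity via translations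
    intro x y
    refine ⟨Equiv.addRight (x + y),
      Subgroup.subset_closure (Set.mem_union_right _ ⟨x + y, rfl⟩), ?_⟩
    show x + (x + y) = y
    rw [← add_assoc, mat_add_self, zero_add]
  · -- no block system
    rintro ⟨B, ⟨hempty, hex⟩, hinv, hB1, hB2⟩
    -- hex : ∀ a, ∃! b, b ∈ B ∧ a ∈ b
    -- ρ and Γ
    set ρ : (Fin b → Fin s → ZMod 2) → (Fin b → Fin s → ZMod 2) :=
      fun x => lam (fun j => γS j (x j)) with hρdef
    set Γ : (Fin b → Fin s → ZMod 2) → (Fin b → Fin t → ZMod 2) :=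
      fun x j => γS j (x j) with hΓdef
    have hρΓ : ∀ x, ρ x = lam (Γ x) := fun _ => rfl
    have hΓ0 : Γ 0 = 0 := funext fun j => h0 j
    -- uniqueness of blocks through a point
    have huniq : ∀ {c c' : Set (Fin b → Fin s → ZMod 2)}, c ∈ B → c' ∈ B →
        ∀ {x}, x ∈ c → x ∈ c' → c = c' := by
      intro c c' hc hc' x hxc hxc'
      obtain ⟨d, -, hd⟩ := hex x
      rw [hd c ⟨hc, hxc⟩, hd c' ⟨hc', hxc'⟩]
    obtain ⟨U, ⟨hUB, hU0⟩, -⟩ := hex 0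
    -- blocks are nonempty
    have hne : ∀ c ∈ B, ∃ x, x ∈ c := by
      intro c hc
      rcases Set.eq_empty_or_nonempty c with h | h
      · exact absurd (h ▸ hc) hempty
      · exact h
    -- invariance under translations and ρ
    have htrans : ∀ c ∈ B, ∀ k, (fun v => v + k) '' c ∈ B := by
      intro c hc k
      have h := hinv c hc (Equiv.addRight k)
        (Subgroup.subset_closure (Set.mem_union_right _ ⟨k, rfl⟩))
      simpa [Equiv.coe_addRight] using h
    have hρB : ∀ c ∈ B, ρ '' c ∈ B := by
      intro c hc
      have h := hinv c hc (Equiv.ofBijective _ hbij)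
        (Subgroup.subset_closure (Set.mem_union_left _ rfl))
      have hcoe : ⇑(Equiv.ofBijective _ hbij) = ρ := rfl
      rwa [hcoe] at h
    -- U is closed under addition
    have hUadd : ∀ u ∈ U, ∀ u' ∈ U, u + u' ∈ U := by
      intro u hu u' hu'
      have hB' : (fun v => v + u') '' U ∈ B := htrans U hUB u'
      have h0' : u' ∈ (fun v => v + u') '' U := ⟨0, hU0, by simp⟩
      have heq : (fun v => v + u') '' U = U := huniq hB' hUB h0' hu'
      rw [← heq]; exact ⟨u, hu, rfl⟩
    -- the key block identity
    have hblock : ∀ x, ρ '' ((fun v => v + x) '' U) = (fun v => v + ρ x) '' U := by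
      intro x
      have h1 : ρ '' ((fun v => v + x) '' U) ∈ B := hρB _ (htrans U hUB x)
      have h2 : (fun v => v + ρ x) '' U ∈ B := htrans U hUB (ρ x)
      have hm1 : ρ x ∈ ρ '' ((fun v => v + x) '' U) := ⟨x, ⟨0, hU0, by simp⟩, rfl⟩
      have hm2 : ρ x ∈ (fun v => v + ρ x) '' U := ⟨0, hU0, by simp⟩
      exact huniq h1 h2 hm1 hm2
    -- key equivalence
    have key : ∀ x y, x + y ∈ U ↔ ρ x + ρ y ∈ U := by
      intro x y
      constructor
      · intro h
        have hy : y ∈ (fun v => v + x) '' U :=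
          ⟨x + y, h, by show x + y + x = y; rw [add_comm x y, add_assoc, mat_add_self, add_zero]⟩
        have hmem : ρ y ∈ (fun v => v + ρ x) '' U := by
          rw [← hblock x]; exact ⟨y, hy, rfl⟩
        rcases hmem with ⟨u, hu, hu'⟩
        have hu2 : u + ρ x = ρ y := hu'
        have : ρ x + ρ y = u := by
          rw [← hu2, add_comm u (ρ x), ← add_assoc, mat_add_self, zero_add]
        rw [this]; exact hu
      · intro h
        have hmem : ρ y ∈ (fun v => v + ρ x) '' U :=
          ⟨ρ x + ρ y, h, by show ρ x + ρ y + ρ x = ρ y; rw [add_comm (ρ x) (ρ y), add_assoc, mat_add_self, add_zero]⟩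
        rw [← hblock x] at hmem
        rcases hmem with ⟨z, hz, hz'⟩
        have hzy : z = y := hbij.1 hz'
        rcases hz with ⟨u, hu, hu'⟩
        have hu2 : u + x = z := hu'
        have : x + y = u := by
          rw [← hzy, ← hu2, add_comm u x, ← add_assoc, mat_add_self, zero_add]
        rw [this]; exact hu
    -- nontriviality of U
    have hUuniv : U ≠ Set.univ := by
      intro h
      apply hB1
      ext c
      simp only [Set.mem_singleton_iff]
      constructor
      · intro hc
        obtain ⟨x, hx⟩ := hne c hc
        have hcx : (fun v => v + x) '' U ∈ B := htrans U hUB x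
        have hxmem : x ∈ (fun v => v + x) '' U := ⟨0, hU0, by simp⟩
        have hceq := huniq hc hcx hx hxmem
        rw [hceq]
        apply Set.eq_univ_of_forall
        intro z
        exact ⟨z + x, h ▸ Set.mem_univ _, by show z + x + x = z; rw [add_assoc, mat_add_self, add_zero]⟩
      · intro hc; rw [hc, ← h]; exact hUB
    have hUnontriv : ∃ u ∈ U, u ≠ 0 := by
      by_contra hcon
      push_neg at hcon
      apply hB2
      ext c
      simp only [Set.mem_setOf_eq]
      constructor
      · intro hc
        obtain ⟨x, hx⟩ := hne c hc
        refine ⟨x, ?_⟩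
        have hcx : (fun v => v + x) '' U ∈ B := htrans U hUB x
        have hxmem : x ∈ (fun v => v + x) '' U := ⟨0, hU0, by simp⟩
        have hceq := huniq hc hcx hx hxmem
        rw [hceq]
        ext z
        constructor
        · rintro ⟨u, hu, rfl⟩
          exact Set.mem_singleton_iff.mpr (by show u + x = x; rw [hcon u hu, zero_add])
        · intro hz
          rw [Set.mem_singleton_iff] at hz
          exact ⟨0, hU0, by show (0 : Fin b → Fin s → ZMod 2) + x = z; rw [zero_add]; exact hz.symm⟩
      · rintro ⟨x, rfl⟩
        have hcx : (fun v => v + x) '' U ∈ B := htrans U hUB x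
        have : (fun v => v + x) '' U = {x} := by
          ext z
          constructor
          · rintro ⟨u, hu, rfl⟩
            exact Set.mem_singleton_iff.mpr (by show u + x = x; rw [hcon u hu, zero_add])
          · intro hz
            rw [Set.mem_singleton_iff] at hz
            exact ⟨0, hU0, by show (0 : Fin b → Fin s → ZMod 2) + x = z; rw [zero_add]; exact hz.symm⟩
        rwa [this] at hcx
    -- U as a submodule
    have hUneg : ∀ u ∈ U, -u ∈ U := by
      intro u hu; rwa [mat_neg_self]
    set Uadd : AddSubgroup (Fin b → Fin s → ZMod 2) :=
      { carrier := U
        add_mem' := fun ha hb' => hUadd _ ha _ hb'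
        zero_mem' := hU0
        neg_mem' := fun ha => hUneg _ ha } with hUasdef
    set Usub : Submodule (ZMod 2) (Fin b → Fin s → ZMod 2) :=
      AddSubgroup.toZModSubmodule 2 Uadd with hUsdef
    have hUsub_mem : ∀ x, x ∈ Usub ↔ x ∈ U := fun x => Iff.rfl
    set S : Submodule (ZMod 2) (Fin b → Fin t → ZMod 2) := Usub.comap lam with hSdef
    have hS_mem : ∀ w, w ∈ S ↔ lam w ∈ U := fun w => Iff.rfl
    -- key in terms of S
    have keyS : ∀ x y, Γ x + Γ y ∈ S ↔ x + y ∈ U := by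
      intro x y
      rw [hS_mem, map_add]
      exact (key x y).symm
    have hxU : ∀ x, x ∈ U ↔ Γ x ∈ S := by
      intro x
      have h := keyS x 0
      rw [hΓ0, add_zero, add_zero] at h
      exact h.symm
    have hρU : ∀ x, x ∈ U ↔ ρ x ∈ U := by
      intro x
      rw [hxU x, hS_mem, hρΓ]
    -- brick submodules
    set Ubar : Fin b → Submodule (ZMod 2) (Fin s → ZMod 2) :=
      fun j => Usub.comap (LinearMap.single (ZMod 2) (fun _ => Fin s → ZMod 2) j) with hUbardef
    set Rj : Fin b → Submodule (ZMod 2) (Fin t → ZMod 2) :=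
      fun j => S.comap (LinearMap.single (ZMod 2) (fun _ => Fin t → ZMod 2) j) with hRjdef
    have hUbar_mem : ∀ j a, a ∈ Ubar j ↔ Pi.single j a ∈ U := fun j a => Iff.rfl
    have hRj_mem : ∀ j c, c ∈ Rj j ↔ lam (Pi.single j c) ∈ U := fun j c => Iff.rfl
    have hRj_memS : ∀ j c, c ∈ Rj j ↔ Pi.single j c ∈ S := fun j c => Iff.rfl
    have hΓsingle : ∀ (j : Fin b) (a : Fin s → ZMod 2),
        Γ (Pi.single j a) = Pi.single j (γS j a) := by
      intro j a
      funext i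
      by_cases h : i = j
      · subst h; simp [hΓdef]
      · simp [hΓdef, Pi.single_eq_of_ne h, h0]
    have hb1 : ∀ (j : Fin b) (a : Fin s → ZMod 2), a ∈ Ubar j ↔ γS j a ∈ Rj j := by
      intro j a
      rw [hUbar_mem, hRj_memS, hxU (Pi.single j a), hΓsingle]
    have hKR : ∀ (j : Fin b) (c : Fin t → ZMod 2),
        embedBrick j c ∈ LinearMap.ker lam → c ∈ Rj j := by
      intro j c hc
      rw [embedBrick_eq_single, LinearMap.mem_ker] at hc
      rw [hRj_mem, hc]
      exact hU0
    -- derivative lemma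
    have hb3 : ∀ u ∈ U, ∀ (j : Fin b) (a d : Fin s → ZMod 2),
        γS j (a + u j) + γS j a + (γS j (a + d + u j) + γS j (a + d)) ∈ Rj j := by
      intro u hu j a d
      have key1 : ∀ a' : Fin s → ZMod 2, Γ (Pi.single j a' + u) + Γ (Pi.single j a') ∈ S := by
        intro a'
        rw [keyS]
        have : Pi.single j a' + u + Pi.single j a' = u := by
          rw [add_comm (Pi.single j a') u, add_assoc, mat_add_self, add_zero]
        rwa [this]
      have h3 := S.add_mem (key1 a) (key1 (a + d))
      have h4 : Γ (Pi.single j a + u) + Γ (Pi.single j a) +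
          (Γ (Pi.single j (a + d) + u) + Γ (Pi.single j (a + d))) =
          Pi.single j (γS j (a + u j) + γS j a + (γS j (a + d + u j) + γS j (a + d))) := by
        funext i
        by_cases h : i = j
        · subst h
          simp [hΓdef]
        · simp [hΓdef, Pi.single_eq_of_ne h, h0, vec_add_self]
      rw [h4] at h3
      exact (hRj_memS _ _).mpr h3
    -- cardinality facts
    have hbound : ∀ (j : Fin b) (u : Fin s → ZMod 2), u ≠ 0 → ∀ v : Fin t → ZMod 2,
        Nat.card {x : Fin s → ZMod 2 | γS j x + γS j (x + u) = v} ≤ 2 ^ δ := by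
      intro j u hu v
      have hset : Nat.card {x : Fin s → ZMod 2 | γS j x + γS j (x + u) = v} ∈
          {d : ℕ | ∃ u0 : Fin s → ZMod 2, u0 ≠ 0 ∧ ∃ v0 : Fin t → ZMod 2,
            d = Nat.card {x : Fin s → ZMod 2 | γS j x + γS j (x + u0) = v0}} := ⟨u, hu, v, rfl⟩
      have hbdd : BddAbove {d : ℕ | ∃ u0 : Fin s → ZMod 2, u0 ≠ 0 ∧ ∃ v0 : Fin t → ZMod 2,
          d = Nat.card {x : Fin s → ZMod 2 | γS j x + γS j (x + u0) = v0}} := by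
        refine ⟨2 ^ s, ?_⟩
        rintro d ⟨u0, -, v0, rfl⟩
        calc Nat.card {x : Fin s → ZMod 2 | γS j x + γS j (x + u0) = v0}
            ≤ Nat.card (Fin s → ZMod 2) :=
              Nat.card_le_card_of_injective _ Subtype.val_injective
          _ = 2 ^ s := by
              rw [Nat.card_fun, Nat.card_zmod, Nat.card_eq_fintype_card, Fintype.card_fin]
      have hd : diffUnif (γS j) = sSup {d : ℕ | ∃ u0 : Fin s → ZMod 2, u0 ≠ 0 ∧
          ∃ v0 : Fin t → ZMod 2,
          d = Nat.card {x : Fin s → ZMod 2 | γS j x + γS j (x + u0) = v0}} := rfl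
      have h := le_csSup hbdd hset
      rw [← hd, hdu j] at h
      exact h
    -- lower bound on Rj when U has an element supported at j
    have hRlow : ∀ (j : Fin b), ∀ u ∈ U, u j ≠ 0 → 2 ^ (s - δ) ≤ Nat.card (Rj j) := by
      intro j u hu hune
      have hmemφ : ∀ a : Fin s → ZMod 2,
          γS j (u j) + (γS j (a + u j) + γS j a) ∈ Rj j := by
        intro a
        have h := hb3 u hu j 0 a
        simpa only [zero_add, h0 j, add_zero] using h
      have hcount : Fintype.card (Fin s → ZMod 2) ≤
          2 ^ δ * Nat.card ((Rj j : Set (Fin t → ZMod 2))) := by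
        apply aux_card_le _ _ (fun a => hmemφ a)
        intro v
        have hfe : (Finset.univ.filter fun a : Fin s → ZMod 2 =>
            γS j (u j) + (γS j (a + u j) + γS j a) = v) =
            (Finset.univ.filter fun a : Fin s → ZMod 2 =>
            γS j a + γS j (a + u j) = γS j (u j) + v) := by
          apply Finset.filter_congr
          intro a _
          constructor
          · intro h
            rw [← h, ← add_assoc, vec_add_self, zero_add, add_comm]
          · intro h
            rw [add_comm (γS j a) (γS j (a + u j))] at h
            rw [h, ← add_assoc, vec_add_self, zero_add]
        rw [hfe, ← aux_natcard_filter]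
        exact hbound j (u j) hune _
      have hc1 : (2 : ℕ) ^ s ≤ 2 ^ δ * Nat.card (Rj j) := by
        calc (2 : ℕ) ^ s = Fintype.card (Fin s → ZMod 2) := by
              rw [Fintype.card_fun, ZMod.card, Fintype.card_fin]
          _ ≤ 2 ^ δ * Nat.card ((Rj j : Set (Fin t → ZMod 2))) := hcount
          _ = 2 ^ δ * Nat.card (Rj j) := rfl
      have h2 : (2 : ℕ) ^ δ * 2 ^ (s - δ) = 2 ^ s := by
        rw [← pow_add, Nat.add_sub_cancel' hδs.le]
      rw [← h2] at hc1
      exact Nat.le_of_mul_le_mul_left hc1 (by positivity)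
    -- the set identity for NonInvariant
    have hb6 : ∀ j : Fin b,
        {x : Fin t → ZMod 2 | ∃ a ∈ Ubar j, ∃ c : Fin t → ZMod 2,
          embedBrick j c ∈ LinearMap.ker lam ∧ x = γS j a + c} =
          ((Rj j : Set (Fin t → ZMod 2))) := by
      intro j
      ext x
      simp only [Set.mem_setOf_eq, SetLike.mem_coe]
      constructor
      · rintro ⟨a, ha, c, hc, rfl⟩
        exact (Rj j).add_mem ((hb1 j a).mp ha) (hKR j c hc)
      · intro hx
        obtain ⟨y, hy⟩ := hbij.2 (lam (Pi.single j x))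
        have hyρ : ρ y = lam (Pi.single j x) := hy
        have hyU : y ∈ U := by
          rw [hρU y, hyρ]
          exact (hRj_mem j x).mp hx
        set z : Fin b → Fin t → ZMod 2 := Pi.single j x + Γ y with hzdef
        have hzker : z ∈ LinearMap.ker lam := by
          rw [LinearMap.mem_ker, hzdef, map_add]
          have : lam (Γ y) = lam (Pi.single j x) := by rw [← hρΓ, hyρ]
          rw [this, mat_add_self]
        have hzj : z j = x + γS j (y j) := by
          rw [hzdef, Pi.add_apply, Pi.single_eq_same]
        have hzjR : z j ∈ Rj j := hKR j (z j) (hker z hzker j)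
        have hγyj : γS j (y j) = x + z j := by
          rw [hzj, ← add_assoc, vec_add_self, zero_add]
        refine ⟨y j, ?_, z j, hker z hzker j, ?_⟩
        · rw [hb1, hγyj]
          exact (Rj j).add_mem hx hzjR
        · rw [hγyj, add_assoc, vec_add_self, add_zero]
    -- dichotomy
    have hdich : ∀ j : Fin b, Ubar j = ⊤ ∨ ∀ u ∈ U, u j = 0 := by
      intro j
      by_contra hcon
      push_neg at hcon
      obtain ⟨htop, u, hu, hune⟩ := hcon
      have hRtop : Rj j ≠ ⊤ := by
        intro h
        apply htop
        rw [Submodule.eq_top_iff']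
        intro a
        rw [hb1, h]
        exact Submodule.mem_top
      have hfr := hni j (Ubar j) (Rj j) htop hRtop (hb6 j)
      have hcard := aux_card_submodule (Rj j)
      have hlow := hRlow j u hu hune
      rw [hcard] at hlow
      have hlt : (2 : ℕ) ^ Module.finrank (ZMod 2) (Rj j) < 2 ^ (s - δ) :=
        Nat.pow_lt_pow_right one_lt_two hfr
      exact absurd (hlow.trans_lt hlt) (lt_irrefl _)
    -- the wall
    set I : Finset (Fin b) := Finset.univ.filter (fun j => Ubar j = ⊤) with hIdef
    have hImem : ∀ j, j ∈ I ↔ Ubar j = ⊤ := by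
      intro j
      rw [hIdef, Finset.mem_filter]
      simp
    have hIne : I.Nonempty := by
      obtain ⟨u, hu, hune⟩ := hUnontriv
      have hj : ∃ j, u j ≠ 0 := by
        by_contra h
        push_neg at h
        exact hune (funext h)
      obtain ⟨j, hj⟩ := hj
      refine ⟨j, (hImem j).mpr ?_⟩
      rcases hdich j with h | h
      · exact h
      · exact absurd (h u hu) hj
    have hIuniv : I ≠ Finset.univ := by
      intro h
      apply hUuniv
      apply Set.eq_univ_of_forall
      intro x
      have hx : x = ∑ j, Pi.single j (x j) := (Finset.univ_sum_single x).symm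
      have hsum : (∑ j, Pi.single j (x j)) ∈ Usub := by
        apply Submodule.sum_mem
        intro j _
        have hjI : j ∈ I := by rw [h]; exact Finset.mem_univ j
        have hjt : Ubar j = ⊤ := (hImem j).mp hjI
        have : x j ∈ Ubar j := by rw [hjt]; exact Submodule.mem_top
        exact (hUbar_mem j (x j)).mp this
      rw [hx]
      exact (hUsub_mem _).mp hsum
    -- contradiction with properness
    apply hproper I hIne hIuniv
    intro w hw
    simp only [Set.mem_preimage, Set.mem_setOf_eq] at hw
    have hlamU : lam w ∈ U := by
      have hws : lam w = ∑ j, Pi.single j (lam w j) := (Finset.univ_sum_single _).symm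
      have hsum : (∑ j, Pi.single j (lam w j)) ∈ Usub := by
        apply Submodule.sum_mem
        intro j _
        by_cases hj : j ∈ I
        · have hjt : Ubar j = ⊤ := (hImem j).mp hj
          have : lam w j ∈ Ubar j := by rw [hjt]; exact Submodule.mem_top
          exact (hUbar_mem j (lam w j)).mp this
        · rw [hw j hj, Pi.single_zero]
          exact Usub.zero_mem
      rw [hws]
      exact (hUsub_mem _).mp hsum
    obtain ⟨y, hy⟩ := hbij.2 (lam w)
    have hyρ : ρ y = lam w := hy
    have hyU : y ∈ U := by rw [hρU y, hyρ]; exact hlamU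
    refine ⟨Γ y, ?_, w + Γ y, ?_, ?_⟩
    · intro j hj
      have hyj : y j = 0 := by
        rcases hdich j with h | h
        · exact absurd ((hImem j).mpr h) hj
        · exact h y hyU
      show γS j (y j) = 0
      rw [hyj, h0 j]
    · rw [LinearMap.mem_ker, map_add]
      have : lam (Γ y) = lam w := by rw [← hρΓ, hyρ]
      rw [this, mat_add_self]
    · rw [add_comm w (Γ y), ← add_assoc, mat_add_self, zero_add]
end

section
/- With the same parallel setting, let ρ = γλ ∈ Sym(V) be the generating function of a wave cipher. If there is 1 ≤ δ < s such that each S-box γ_j is weakly 2^δ-differentially uniform (|Im(γ̂_{j,u})| > 2^{s−1−δ} for all u ≠ 0) and δ-non-invariant with respect to λ, and Ker λ = ⊕_j (Ker λ ∩ W_j), then ⟨T_n, ρ⟩ is primitive on V. -/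
variable {b s t : ℕ}

section helpers

lemma zmod2_add_self {M : Type*} [AddCommGroup M] [Module (ZMod 2) M] (x : M) : x + x = 0 := by
  have h : ((2 : ZMod 2)) • x = 0 := by
    rw [show (2 : ZMod 2) = 0 by decide, zero_smul]
  rwa [two_smul] at h

/-- The generic brick embedding as a linear map. -/
def embedL (n m : ℕ) (j : Fin n) :
    (Fin m → ZMod 2) →ₗ[ZMod 2] (Fin n → Fin m → ZMod 2) where
  toFun v := fun i => if i = j then v else 0
  map_add' x y := by funext i; by_cases h : i = j <;> simp [h]
  map_smul' c x := by funext i; by_cases h : i = j <;> simp [h]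

lemma embedL_apply {n m : ℕ} (j : Fin n) (v : Fin m → ZMod 2) (i : Fin n) :
    embedL n m j v i = if i = j then v else 0 := rfl

lemma embedL_same {n m : ℕ} (j : Fin n) (v : Fin m → ZMod 2) :
    embedL n m j v j = v := by simp [embedL_apply]

lemma embedL_sum {n m : ℕ} (w : Fin n → Fin m → ZMod 2) :
    ∑ j, embedL n m j (w j) = w := by
  funext i
  rw [Finset.sum_apply]
  simp only [embedL_apply]
  rw [Finset.sum_ite_eq]
  simp

end helpers

/-- if every S-box is weakly `2^δ`-differentially uniform
    (`|Im(γ̂_{j,u})| > 2^(s−1−δ)` for all `u ≠ 0`) and `δ`-non-invariant w.r.t. a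
    proper diffusion layer `λ` with parallel kernel, then `⟨T_n, ρ⟩` is primitive. -/
theorem stmt_16 (hst : s ≤ t) (δ : ℕ) (hδ1 : 1 ≤ δ) (hδs : δ < s)
    (γS : Fin b → (Fin s → ZMod 2) → (Fin t → ZMod 2))
    (hinj : ∀ j, Function.Injective (γS j)) (h0 : ∀ j, γS j 0 = 0)
    (lam : (Fin b → Fin t → ZMod 2) →ₗ[ZMod 2] (Fin b → Fin s → ZMod 2))
    (hsurj : Function.Surjective lam) (hproper : ProperDiffusion lam)
    (hker : ∀ w ∈ LinearMap.ker lam, ∀ j, embedBrick j (w j) ∈ LinearMap.ker lam)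
    (hwdu : ∀ j, ∀ u : Fin s → ZMod 2, u ≠ 0 →
      2 ^ (s - 1 - δ) < Nat.card (Set.range (fun x => γS j x + γS j (x + u))))
    (hni : ∀ j, NonInvariant lam (γS j) j δ)
    (hbij : Function.Bijective
      (fun x : Fin b → Fin s → ZMod 2 => lam (fun j => γS j (x j)))) :
    IsPrimitiveSub (Subgroup.closure ({Equiv.ofBijective _ hbij} ∪
      {g : Equiv.Perm (Fin b → Fin s → ZMod 2) |
        ∃ k : Fin b → Fin s → ZMod 2, g = Equiv.addRight k})) := by
  classical
  constructor
  · -- transitivity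
    intro x y
    refine ⟨Equiv.addRight (x + y),
      Subgroup.subset_closure (Set.mem_union_right _ ⟨x + y, rfl⟩), ?_⟩
    show x + (x + y) = y
    rw [← add_assoc, zmod2_add_self, zero_add]
  · rintro ⟨B, ⟨hne, hcell⟩, hinv, hBuniv, hBsing⟩
    set γfull : (Fin b → Fin s → ZMod 2) → (Fin b → Fin t → ZMod 2) :=
      fun x j => γS j (x j) with hγfull
    set ρE : Equiv.Perm (Fin b → Fin s → ZMod 2) := Equiv.ofBijective _ hbij with hρE
    have hρapp : ∀ x, ρE x = lam (γfull x) := fun x => rfl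
    have hρG : ρE ∈ Subgroup.closure
        ({Equiv.ofBijective _ hbij} ∪
          {g : Equiv.Perm (Fin b → Fin s → ZMod 2) |
            ∃ k : Fin b → Fin s → ZMod 2, g = Equiv.addRight k}) :=
      Subgroup.subset_closure (Set.mem_union_left _ rfl)
    have hTG : ∀ k : Fin b → Fin s → ZMod 2, Equiv.addRight k ∈ Subgroup.closure
        ({Equiv.ofBijective _ hbij} ∪
          {g : Equiv.Perm (Fin b → Fin s → ZMod 2) |
            ∃ k : Fin b → Fin s → ZMod 2, g = Equiv.addRight k}) :=
      fun k => Subgroup.subset_closure (Set.mem_union_right _ ⟨k, rfl⟩)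
    -- uniqueness of blocks through a point
    have huniq : ∀ b1 ∈ B, ∀ b2 ∈ B, ∀ a : Fin b → Fin s → ZMod 2,
        a ∈ b1 → a ∈ b2 → b1 = b2 := by
      intro b1 h1 b2 h2 a ha1 ha2
      obtain ⟨c, -, hc⟩ := hcell a
      rw [hc b1 ⟨h1, ha1⟩, hc b2 ⟨h2, ha2⟩]
    obtain ⟨U, ⟨hUB, hU0⟩, -⟩ := hcell 0
    have hblockB : ∀ x, ((fun v => v + x) '' U) ∈ B := by
      intro x
      have h := hinv U hUB (Equiv.addRight x) (hTG x)
      simpa [Equiv.coe_addRight] using h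
    have hblockmem : ∀ x : Fin b → Fin s → ZMod 2, x ∈ (fun v => v + x) '' U :=
      fun x => ⟨0, hU0, zero_add x⟩
    have hUadd : ∀ u ∈ U, ∀ v ∈ U, u + v ∈ U := by
      intro u hu v hv
      have h1 : ((fun w => w + v) '' U) = U :=
        huniq _ (hblockB v) U hUB v (hblockmem v) hv
      rw [← h1]; exact ⟨u, hu, rfl⟩
    set Usub : Submodule (ZMod 2) (Fin b → Fin s → ZMod 2) :=
      { carrier := U
        add_mem' := fun ha hb' => hUadd _ ha _ hb'
        zero_mem' := hU0
        smul_mem' := by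
          intro c x hx
          have hc : c = 0 ∨ c = 1 := by revert c; decide
          rcases hc with rfl | rfl
          · simpa using hU0
          · simpa using hx } with hUsub
    have hγ0 : γfull 0 = 0 := funext fun j => h0 j
    have hρ0 : ρE 0 = 0 := by rw [hρapp, hγ0, map_zero]
    have hρU : ρE '' U = U :=
      huniq _ (hinv U hUB ρE hρG) U hUB 0 ⟨0, hU0, hρ0⟩ hU0
    have hUsurj : ∀ v ∈ U, ∃ u ∈ U, ρE u = v := by
      intro v hv
      rw [← hρU] at hv
      obtain ⟨u, hu, h⟩ := hv
      exact ⟨u, hu, h⟩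
    have hdiff : ∀ u ∈ U, ∀ x, lam (γfull (x + u) + γfull x) ∈ U := by
      intro u hu x
      have hD : ρE '' ((fun v => v + x) '' U) ∈ B := hinv _ (hblockB x) ρE hρG
      have hEq : ρE '' ((fun v => v + x) '' U) = (fun v => v + ρE x) '' U :=
        huniq _ hD _ (hblockB (ρE x)) (ρE x) ⟨x, hblockmem x, rfl⟩ (hblockmem _)
      have hmem : ρE (u + x) ∈ (fun v => v + ρE x) '' U := by
        rw [← hEq]; exact ⟨u + x, ⟨u, hu, rfl⟩, rfl⟩
      obtain ⟨w, hw, hweq⟩ := hmem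
      have hweq' : w + ρE x = ρE (u + x) := hweq
      have hw2 : w = ρE (u + x) + ρE x := by
        have h3 : w = (w + ρE x) + ρE x := by
          rw [add_assoc, zmod2_add_self, add_zero]
        rw [hweq'] at h3; exact h3
      have h4 : lam (γfull (x + u) + γfull x) = w := by
        rw [map_add, hw2, add_comm u x, hρapp, hρapp]
      rw [h4]; exact hw
    have hγU : ∀ u ∈ U, γfull u ∈ Usub.comap lam := by
      intro u hu
      have h := hdiff u hu 0
      exact (by simpa [hγ0] using h : lam (γfull u) ∈ U)
    -- key lemma: a brick touched by U is contained in U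
    have hkey : ∀ j : Fin b, (∃ u ∈ U, u j ≠ 0) → ∀ a, embedL b s j a ∈ U := by
      rintro j ⟨u, hu, huj⟩
      set Tj : Submodule (ZMod 2) (Fin t → ZMod 2) :=
        (Usub.comap lam).comap (embedL b t j) with hTj
      have hTjmem : ∀ c, c ∈ Tj ↔ lam (embedL b t j c) ∈ U := fun c => Iff.rfl
      have hembedγ : ∀ a : Fin s → ZMod 2,
          γfull (embedL b s j a) = embedL b t j (γS j a) := by
        intro a; funext i
        by_cases h : i = j
        · subst h; simp [hγfull, embedL_apply]
        · simp [hγfull, embedL_apply, h, h0]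
      have hdiffj : ∀ x y : Fin s → ZMod 2,
          (γS j x + γS j (x + u j)) + (γS j y + γS j (y + u j)) ∈ Tj := by
        intro x y
        have d1 := hdiff u hu (embedL b s j x)
        have d2 := hdiff u hu (embedL b s j y)
        have hsum : lam ((γfull (embedL b s j x + u) + γfull (embedL b s j x)) +
            (γfull (embedL b s j y + u) + γfull (embedL b s j y))) ∈ U := by
          rw [map_add]; exact hUadd _ d1 _ d2
        have heq : (γfull (embedL b s j x + u) + γfull (embedL b s j x)) +
            (γfull (embedL b s j y + u) + γfull (embedL b s j y)) =
            embedL b t j ((γS j x + γS j (x + u j)) + (γS j y + γS j (y + u j))) := by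
          funext i
          by_cases h : i = j
          · simp only [h, hγfull, Pi.add_apply, embedL_same]
            abel
          · simp only [hγfull, embedL_apply, if_neg h, Pi.add_apply, Pi.zero_apply,
              zero_add]
            rw [h0, add_zero]
            exact zmod2_add_self _
        rw [heq] at hsum
        exact (hTjmem _).2 hsum
      have hcard2 : 2 ^ (s - 1 - δ) < Nat.card Tj := by
        refine lt_of_lt_of_le (hwdu j (u j) huj) ?_
        have hmemTj : ∀ y ∈ Set.range (fun x => γS j x + γS j (x + u j)),
            y + (γS j 0 + γS j (0 + u j)) ∈ Tj := by
          rintro y ⟨x, rfl⟩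
          exact hdiffj x 0
        refine Nat.card_le_card_of_injective
          (fun y => (⟨y.1 + (γS j 0 + γS j (0 + u j)), hmemTj _ y.2⟩ : Tj)) ?_
        intro y1 y2 h12
        have := congrArg Subtype.val h12
        simp only at this
        exact Subtype.ext (add_right_cancel this)
      have hrank : ¬ Module.finrank (ZMod 2) Tj < s - δ := by
        intro hlt
        have hcardTj : Nat.card Tj = 2 ^ Module.finrank (ZMod 2) Tj := by
          haveI : Fintype ↥Tj := Fintype.ofFinite _
          rw [Nat.card_eq_fintype_card, Module.card_eq_pow_finrank (K := ZMod 2), ZMod.card]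
        rw [hcardTj] at hcard2
        have h1 : Module.finrank (ZMod 2) Tj ≤ s - 1 - δ := by omega
        exact absurd hcard2 (not_lt.2 (Nat.pow_le_pow_right (by norm_num) h1))
      set Vj' : Submodule (ZMod 2) (Fin s → ZMod 2) := Usub.comap (embedL b s j) with hVj'
      by_cases hVtop : Vj' = ⊤
      · intro a
        have ha : a ∈ Vj' := by rw [hVtop]; trivial
        exact ha
      by_cases hTtop : Tj = ⊤
      · intro a
        have h1 : γS j a ∈ Tj := by rw [hTtop]; trivial
        have h3 : ρE (embedL b s j a) ∈ U := by
          rw [hρapp, hembedγ]; exact (hTjmem _).1 h1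
        obtain ⟨u', hu', hequ⟩ := hUsurj _ h3
        have h4 : u' = embedL b s j a := ρE.injective hequ
        rw [← h4]; exact hu'
      exfalso
      apply hrank
      apply hni j Vj' Tj hVtop hTtop
      ext c
      simp only [Set.mem_setOf_eq, SetLike.mem_coe]
      constructor
      · rintro ⟨a, ha, c', hc', rfl⟩
        rw [hTjmem, map_add, map_add]
        have hA : lam (embedL b t j (γS j a)) ∈ U := by
          rw [← hembedγ]
          exact hγU _ ha
        have hB : lam (embedL b t j c') = 0 := LinearMap.mem_ker.mp hc'
        rw [hB, add_zero]
        exact hA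
      · intro hc
        obtain ⟨u', hu', hequ⟩ := hUsurj _ ((hTjmem c).1 hc)
        have hkmem : embedL b t j c + γfull u' ∈ LinearMap.ker lam := by
          rw [LinearMap.mem_ker, map_add]
          have h5 : lam (γfull u') = lam (embedL b t j c) := by
            rw [← hρapp]; exact hequ
          rw [h5, zmod2_add_self]
        have hw : γfull u' + γfull (embedL b s j (u' j)) ∈ LinearMap.ker lam := by
          have hrepr : γfull u' + γfull (embedL b s j (u' j)) =
              ∑ i, embedL b t i ((γfull u' + γfull (embedL b s j (u' j))) i) :=
            (embedL_sum _).symm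
          rw [hrepr]
          apply Submodule.sum_mem
          intro i _
          by_cases h : i = j
          · have hz : (γfull u' + γfull (embedL b s j (u' j))) i = 0 := by
              simp only [hγfull, Pi.add_apply, h, embedL_same]
              exact zmod2_add_self _
            rw [hz, map_zero]
            exact Submodule.zero_mem _
          · have hcomp : (γfull u' + γfull (embedL b s j (u' j))) i =
                (embedL b t j c + γfull u') i := by
              simp only [hγfull, Pi.add_apply, embedL_apply, if_neg h]
              rw [h0, add_zero, zero_add]
            rw [hcomp]
            exact hker _ hkmem i
        have hγeq : lam (γfull (embedL b s j (u' j))) = lam (γfull u') := by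
          have h6 := LinearMap.mem_ker.mp hw
          rw [map_add] at h6
          have h7 := neg_eq_of_add_eq_zero_right h6
          rw [← h7]
          exact neg_eq_of_add_eq_zero_left (zmod2_add_self _)
        have hu'eq : u' = embedL b s j (u' j) := by
          apply ρE.injective
          rw [hρapp, hρapp]
          exact hγeq.symm
        refine ⟨u' j, ?_, c + γS j (u' j), ?_, ?_⟩
        · show embedL b s j (u' j) ∈ Usub
          rw [← hu'eq]; exact hu'
        · show embedL b t j (c + γS j (u' j)) ∈ LinearMap.ker lam
          rw [map_add]
          have h8 : embedL b t j (γS j (u' j)) = γfull u' := by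
            rw [← hembedγ, ← hu'eq]
          rw [h8]
          exact hkmem
        · rw [add_comm c, ← add_assoc, zmod2_add_self, zero_add]
    -- the support of U
    set I : Finset (Fin b) := Finset.univ.filter (fun j => ∀ a, embedL b s j a ∈ U) with hI
    have hImem : ∀ j, j ∈ I ↔ ∀ a, embedL b s j a ∈ U := by
      intro j; simp [hI]
    have hwall1 : ∀ u ∈ U, ∀ j, j ∉ I → u j = 0 := by
      intro u hu j hj
      by_contra hne'
      exact hj ((hImem j).2 (hkey j ⟨u, hu, hne'⟩))
    have hwall2 : ∀ v : Fin b → Fin s → ZMod 2, (∀ j ∉ I, v j = 0) → v ∈ U := by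
      intro v hv
      have hrepr : v = ∑ j, embedL b s j (v j) := (embedL_sum v).symm
      rw [hrepr]
      refine Submodule.sum_mem Usub ?_
      intro j _
      by_cases hj : j ∈ I
      · exact (hImem j).1 hj (v j)
      · rw [hv j hj, map_zero]
        exact Usub.zero_mem
    have hUneTop : U ≠ Set.univ := by
      intro hU
      apply hBuniv
      apply Set.eq_singleton_iff_unique_mem.2
      constructor
      · rw [← hU]; exact hUB
      · intro b' hb'
        obtain ⟨y, hy⟩ := Set.nonempty_iff_ne_empty.2 (fun h => hne (h ▸ hb'))
        have h9 : b' = U := huniq b' hb' U hUB y hy (by rw [hU]; trivial)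
        rw [h9, hU]
    have hUexists : ∃ u ∈ U, u ≠ 0 := by
      by_contra h
      push_neg at h
      apply hBsing
      have hsing : ∀ x : Fin b → Fin s → ZMod 2, (fun v => v + x) '' U = {x} := by
        intro x
        apply Set.eq_singleton_iff_unique_mem.2
        refine ⟨hblockmem x, ?_⟩
        rintro y ⟨v, hv, rfl⟩
        show v + x = x
        rw [h v hv, zero_add]
      ext b'
      simp only [Set.mem_setOf_eq]
      constructor
      · intro hb'
        obtain ⟨y, hy⟩ := Set.nonempty_iff_ne_empty.2 (fun hh => hne (hh ▸ hb'))
        refine ⟨y, ?_⟩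
        rw [huniq b' hb' _ (hblockB y) y hy (hblockmem y), hsing y]
      · rintro ⟨x, rfl⟩
        rw [← hsing x]
        exact hblockB x
    obtain ⟨u0, hu0U, hu0ne⟩ := hUexists
    have hInonempty : I.Nonempty := by
      obtain ⟨j, hj⟩ : ∃ j, u0 j ≠ 0 := by
        by_contra hall
        push_neg at hall
        exact hu0ne (funext hall)
      exact ⟨j, (hImem j).2 (hkey j ⟨u0, hu0U, hj⟩)⟩
    have hIne : I ≠ Finset.univ := by
      intro hIu
      apply hUneTop
      apply Set.eq_univ_of_forall
      intro v
      exact hwall2 v (fun j hj => absurd (by rw [hIu]; exact Finset.mem_univ j) hj)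
    apply hproper I hInonempty hIne
    intro w hw
    have h1 : lam w ∈ U := hwall2 (lam w) hw
    obtain ⟨u', hu', hequ⟩ := hUsurj _ h1
    refine ⟨γfull u', ?_, w + γfull u', ?_, ?_⟩
    · intro j hj
      show γS j (u' j) = 0
      rw [hwall1 u' hu' j hj]
      exact h0 j
    · rw [LinearMap.mem_ker, map_add]
      have h2 : lam (γfull u') = lam w := by rw [← hρapp]; exact hequ
      rw [h2, zmod2_add_self]
    · rw [add_comm w, ← add_assoc, zmod2_add_self, zero_add]
end
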